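/- arXiv:0804.0152 — 8 statements merged into one kernel-verified Lean document; each statement's English description precedes it below -/
import Mathlib

section
/- Let N be an odd perfect number (i.e., N is odd and σ(N) = 2N, where σ is the sum-of-divisors function). Then N ≡ 1 (mod 12) or N ≡ 9 (mod 36). -/
/-!
Pair each divisor `d` of `N` with `N / d`. Modulo `3` and modulo `4` every unit squares to `1`
and `-1` is not a square, so if `N ≡ -1` then each pair sums to `0` and no divisor is paired with
itself; hence `N ≡ -1 (mod 3)` or `(mod 4)` would force `3 ∣ σ(N) = 2N` or `4 ∣ 2N`, impossible
for odd `N`. So `N ≡ 1 (mod 4)` and `N ≢ 2 (mod 3)`. If `3 ∥ N` then `4 = σ(3)` divides `σ(N)`,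
again impossible; so `3 ∣ N` forces `9 ∣ N`.
-/

open Finset

lemma sum_divisors_cast_eq_zero {R : Type*} [CommRing R]
    (hpair : ∀ x y : R, x * y = -1 → x + y = 0) (hsq : ∀ x : R, x * x ≠ -1)
    {N : ℕ} (hN : (N : R) = -1) : ((∑ d ∈ N.divisors, d : ℕ) : R) = 0 := by
  rcases Nat.eq_zero_or_pos N with rfl | hN0
  · simp
  have hmul {d : ℕ} (hd : d ∈ N.divisors) : (d : R) * ((N / d : ℕ) : R) = -1 := by
    rw [← Nat.cast_mul, Nat.mul_div_cancel' (Nat.dvd_of_mem_divisors hd), hN]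
  rw [Nat.cast_sum]
  refine sum_involution (fun d _ => N / d) (fun d hd => hpair _ _ (hmul hd))
    (fun d hd _ hfix => hsq d (by simpa only [hfix] using hmul hd))
    (fun d hd => Nat.mem_divisors.mpr ⟨Nat.div_dvd_of_dvd (Nat.dvd_of_mem_divisors hd), hN0.ne'⟩)
    (fun d hd => Nat.div_div_self (Nat.dvd_of_mem_divisors hd) hN0.ne')

lemma dvd_sum_divisors_of_mod_add_one_eq {m N : ℕ}
    (hpair : ∀ x y : ZMod m, x * y = -1 → x + y = 0) (hsq : ∀ x : ZMod m, x * x ≠ -1)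
    (hN : N % m + 1 = m) : m ∣ ∑ d ∈ N.divisors, d := by
  have hcast : (N : ZMod m) = -1 := by
    rw [eq_neg_iff_add_eq_zero, ← Nat.cast_add_one, ZMod.natCast_eq_zero_iff]
    exact ⟨N / m + 1, by linarith [Nat.div_add_mod N m]⟩
  exact (ZMod.natCast_eq_zero_iff _ _).mp (sum_divisors_cast_eq_zero hpair hsq hcast)

lemma four_dvd_sum_divisors_three_mul {M : ℕ} (hM : ¬ 3 ∣ M) :
    4 ∣ ∑ d ∈ (3 * M).divisors, d := by
  rw [Nat.Coprime.sum_divisors_mul ((Nat.Prime.coprime_iff_not_dvd Nat.prime_three).mpr hM)]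
  exact Dvd.intro _ rfl

theorem touchard (N : ℕ) (hodd : Odd N) (hperf : ∑ d ∈ N.divisors, d = 2 * N) :
    N % 12 = 1 ∨ N % 36 = 9 := by
  have hN2 : N % 2 = 1 := Nat.odd_iff.mp hodd
  have hσ4 : ¬ 4 ∣ ∑ d ∈ N.divisors, d := by rw [hperf]; omega
  have hN4 : N % 4 = 1 := by
    by_contra h
    exact hσ4 (dvd_sum_divisors_of_mod_add_one_eq (by decide) (by decide) (by omega))
  have hN3 : N % 3 ≠ 2 := fun h => by
    have := dvd_sum_divisors_of_mod_add_one_eq (m := 3) (N := N) (by decide) (by decide)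
      (by omega)
    omega
  have hN9 : 3 ∣ N → 9 ∣ N := fun h3 => by
    by_contra h9
    obtain ⟨M, rfl⟩ := h3
    exact hσ4 (four_dvd_sum_divisors_three_mul fun ⟨k, hk⟩ => h9 ⟨k, by omega⟩)
  omega
end

section
/- Let N be an odd perfect number (i.e., N is odd and σ(N) = 2N). If 3 divides N, then N ≡ 9 (mod 36). -/
open Finset

/-
For an odd perfect N, σ(N) = 2N ≡ 2 (mod 4). If N ≡ 3 (mod 4), pairing each
divisor d with N / d gives d + N / d ≡ 0 (mod 4), since d · (N / d) ≡ 3 and d² ≢ 3 (mod 4); so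
4 ∣ σ(N), and hence N ≡ 1 (mod 4). If the exponent a of 3 in N were odd, then σ(3^a) ∣ σ(N) would be
the geometric sum 1 + 3 + ⋯ + 3^a of an even number of terms, divisible by 3 + 1 = 4. So a ≥ 2 is
even, 9 ∣ N, and together with N ≡ 1 (mod 4) this is N ≡ 9 (mod 36).
-/

lemma add_one_dvd_geom_sum_of_even (p : ℕ) {n : ℕ} (hn : Even n) :
    p + 1 ∣ ∑ i ∈ range n, p ^ i := by
  have hp : (p : ZMod (p + 1)) = -1 :=
    eq_neg_of_add_eq_zero_left (by exact_mod_cast ZMod.natCast_self (p + 1))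
  rw [← ZMod.natCast_eq_zero_iff]
  push_cast
  rw [hp, neg_one_geom_sum, if_pos hn]

lemma add_one_dvd_sum_divisors_of_odd_factorization {p N : ℕ} (hp : p.Prime) (hN : N ≠ 0)
    (hodd : Odd (N.factorization p)) : p + 1 ∣ ∑ d ∈ N.divisors, d := by
  have hsplit : ∑ d ∈ N.divisors, d = (∑ d ∈ (p ^ N.factorization p).divisors, d) *
      ∑ d ∈ (N / p ^ N.factorization p).divisors, d := by
    conv_lhs => rw [← Nat.ordProj_mul_ordCompl_eq_self N p]
    exact ((Nat.coprime_ordCompl hp hN).pow_left _).sum_divisors_mul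
  rw [hsplit, Nat.sum_divisors_prime_pow hp]
  exact (add_one_dvd_geom_sum_of_even p hodd.add_one).mul_right _

lemma ZMod.add_eq_zero_of_mul_eq_three {x y : ZMod 4} (h : x * y = 3) : x + y = 0 := by
  revert x y; decide

lemma ZMod.mul_self_ne_three (x : ZMod 4) : x * x ≠ 3 := by
  revert x; decide

lemma four_dvd_sum_divisors_of_mod_four_eq_three {N : ℕ} (hN : N % 4 = 3) :
    4 ∣ ∑ d ∈ N.divisors, d := by
  have hN0 : N ≠ 0 := by rintro rfl; simp at hN
  have hN4 : (N : ZMod 4) = 3 := by rw [← ZMod.natCast_mod, hN]; rfl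
  rw [← ZMod.natCast_eq_zero_iff]
  push_cast
  refine sum_involution (fun d _ => N / d) (fun d hd => ?_) (fun d hd _ heq => ?_)
    (fun d hd => Nat.mem_divisors.mpr ⟨Nat.div_dvd_of_dvd (Nat.dvd_of_mem_divisors hd), hN0⟩)
    (fun d hd => Nat.div_div_self (Nat.dvd_of_mem_divisors hd) hN0)
  · apply ZMod.add_eq_zero_of_mul_eq_three
    rw [← Nat.cast_mul, Nat.mul_div_cancel' (Nat.dvd_of_mem_divisors hd), hN4]
  · apply ZMod.mul_self_ne_three d
    rw [← Nat.cast_mul]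
    nth_rw 2 [← heq]
    rw [Nat.mul_div_cancel' (Nat.dvd_of_mem_divisors hd), hN4]

theorem touchard_three_dvd (N : ℕ) (hodd : Odd N) (hperf : ∑ d ∈ N.divisors, d = 2 * N)
    (h3 : 3 ∣ N) : N % 36 = 9 := by
  have hN0 : N ≠ 0 := by rintro rfl; simp at hodd
  have hodd' : N % 2 = 1 := Nat.odd_iff.mp hodd
  have hsigma : ¬ 4 ∣ ∑ d ∈ N.divisors, d := by rw [hperf]; omega
  have hmod4 : N % 4 = 1 := by
    by_contra h
    exact hsigma (four_dvd_sum_divisors_of_mod_four_eq_three (by omega))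
  have heven : Even (N.factorization 3) := by
    by_contra h
    exact hsigma (add_one_dvd_sum_divisors_of_odd_factorization Nat.prime_three hN0
      (Nat.not_even_iff_odd.mp h))
  have h9 : 9 ∣ N := by
    have hpos : 1 ≤ N.factorization 3 :=
      (Nat.prime_three.dvd_iff_one_le_factorization hN0).mp h3
    have h2 : 2 ≤ N.factorization 3 := by obtain ⟨b, hb⟩ := heven; omega
    exact (pow_dvd_pow 3 h2).trans (Nat.ordProj_dvd N 3)
  omega
end

section
/- Let N be an odd perfect number (i.e., N is odd and σ(N) = 2N). If 3 does not divide N, then N ≡ 1 (mod 12). -/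
/-!
Pairing each divisor `d` of `N` with `N / d` shows: if in a ring `R` every factorisation
`N = x * y` has `x + y = 0` and `N` is not a square, then `σ(N) = 0` in `R`. For `N ≡ -1` modulo
`3` or `4` both conditions hold (every unit squares to `1` and `-1` is not a square), so `σ(N) = 2N`
would force `2N ≡ -2 ≡ 0`, which is absurd. Hence an odd perfect `N` prime to `3` is `1` modulo
both `4` and `3`.
-/

theorem Nat.sum_divisors_natCast_eq_zero {R : Type*} [NonAssocSemiring R] {N : ℕ} (hN : N ≠ 0)
    (hpair : ∀ x y : R, x * y = N → x + y = 0) (hsq : ∀ x : R, x * x ≠ N) :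
    ∑ d ∈ N.divisors, (d : R) = 0 := by
  have hcomp {d : ℕ} (hd : d ∈ N.divisors) : d * (N / d) = N :=
    Nat.mul_div_cancel' (Nat.dvd_of_mem_divisors hd)
  refine Finset.sum_involution (fun d _ => N / d) (fun d hd => ?_) (fun d hd _ hfix => ?_)
    (fun d hd => Nat.mem_divisors.mpr ⟨Nat.div_dvd_of_dvd (Nat.dvd_of_mem_divisors hd), hN⟩)
    (fun d hd => Nat.div_div_self (Nat.dvd_of_mem_divisors hd) hN)
  · exact hpair _ _ (by rw [← Nat.cast_mul, hcomp hd])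
  · refine hsq d ?_
    rw [← Nat.cast_mul]
    nth_rewrite 2 [← hfix]
    rw [hcomp hd]

theorem Nat.sum_divisors_ne_two_mul_of_natCast_eq_neg_one {R : Type*} [Ring R] {N : ℕ}
    (hN : N ≠ 0) (hNR : (N : R) = -1) (hpair : ∀ x y : R, x * y = -1 → x + y = 0)
    (hsq : ∀ x : R, x * x ≠ -1) (htwo : (2 : R) ≠ 0) :
    ∑ d ∈ N.divisors, d ≠ 2 * N := by
  intro hperf
  have hzero : ∑ d ∈ N.divisors, (d : R) = 0 :=
    Nat.sum_divisors_natCast_eq_zero hN (by rwa [hNR]) (by rwa [hNR])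
  have hcast := congrArg (Nat.cast : ℕ → R) hperf
  push_cast at hcast
  rw [hzero, hNR, mul_neg_one, eq_comm, neg_eq_zero] at hcast
  exact htwo hcast

theorem touchard_not_three_dvd (N : ℕ) (hodd : Odd N) (hperf : ∑ d ∈ N.divisors, d = 2 * N)
    (h3 : ¬ 3 ∣ N) : N % 12 = 1 := by
  have hN2 : N % 2 = 1 := Nat.odd_iff.mp hodd
  have hN : N ≠ 0 := by omega
  have hN4 : N % 4 ≠ 3 := fun h =>
    Nat.sum_divisors_ne_two_mul_of_natCast_eq_neg_one (R := ZMod 4) hN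
      (by rw [← ZMod.natCast_mod, h]; rfl) (by decide) (by decide) (by decide) hperf
  have hN3 : N % 3 ≠ 2 := fun h =>
    Nat.sum_divisors_ne_two_mul_of_natCast_eq_neg_one (R := ZMod 3) hN
      (by rw [← ZMod.natCast_mod, h]; rfl) (by decide) (by decide) (by decide) hperf
  omega
end

section
/- Let N be an odd perfect number with N = p^α · Q², where p is a prime, p ≡ 5 (mod 12), α is odd, Q is odd, and p does not divide Q. Then 3 divides Q (equivalently, N can be written as p^α · (3Q')² for some Q'). -/
/-!
Since `p ≡ -1 (mod p + 1)` and `α + 1` is even, `σ(p ^ α) = 1 + p + ⋯ + p ^ α` is divisible by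
`p + 1`, hence by `3` when `p ≡ 2 (mod 3)`. Multiplicativity of `σ` makes `σ(p ^ α)` a divisor of
`σ(N) = 2N`, so `3 ∣ N = p ^ α Q ^ 2` while `3 ∤ p`, which forces `3 ∣ Q`.
-/

theorem Nat.add_one_dvd_geom_sum {x α : ℕ} (hα : Odd α) :
    x + 1 ∣ ∑ k ∈ Finset.range (α + 1), x ^ k := by
  rw [← ZMod.natCast_eq_zero_iff]
  have hx : (x : ZMod (x + 1)) = -1 :=
    eq_neg_of_add_eq_zero_left (by exact_mod_cast ZMod.natCast_self _)
  push_cast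
  rw [hx, neg_one_geom_sum, if_pos hα.add_one]

theorem Nat.add_one_dvd_sum_divisors_prime_pow {p α : ℕ} (hp : p.Prime) (hα : Odd α) :
    p + 1 ∣ ∑ d ∈ (p ^ α).divisors, d := by
  rw [Nat.sum_divisors_prime_pow hp]
  exact Nat.add_one_dvd_geom_sum hα

theorem three_dvd_Q_general (N p α Q : ℕ) (hperf : ∑ d ∈ N.divisors, d = 2 * N)
    (hN : N = p ^ α * Q ^ 2) (hp : p.Prime) (hp5 : p % 12 = 5)
    (hα : Odd α) (hpQ : ¬ p ∣ Q) :
    3 ∣ Q := by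
  have hcop : (p ^ α).Coprime (Q ^ 2) := ((hp.coprime_iff_not_dvd).2 hpQ).pow α 2
  have hσ : 3 ∣ ∑ d ∈ (p ^ α).divisors, d :=
    (show 3 ∣ p + 1 by omega).trans (Nat.add_one_dvd_sum_divisors_prime_pow hp hα)
  have h2N : 3 ∣ 2 * N := by
    rw [← hperf, hN, Nat.Coprime.sum_divisors_mul hcop]
    exact dvd_mul_of_dvd_left hσ _
  have h3N : 3 ∣ p ^ α * Q ^ 2 := hN ▸ (Nat.Coprime.dvd_of_dvd_mul_left (by norm_num) h2N)
  have h3p : ¬ 3 ∣ p ^ α := fun h => by have := Nat.prime_three.dvd_of_dvd_pow h; omega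
  exact Nat.prime_three.dvd_of_dvd_pow ((Nat.prime_three.dvd_mul.1 h3N).resolve_left h3p)

theorem three_dvd_Q (N p α Q : ℕ) (hodd : Odd N) (hperf : ∑ d ∈ N.divisors, d = 2 * N)
    (hN : N = p ^ α * Q ^ 2) (hp : p.Prime) (hp5 : p % 12 = 5)
    (hα : Odd α) (hQ : Odd Q) (hpQ : ¬ p ∣ Q) :
    3 ∣ Q :=
  three_dvd_Q_general N p α Q hperf hN hp hp5 hα hpQ
end

section
/- Let N be an odd perfect number (i.e., N is odd and σ(N) = 2N). Then there exist a prime p, a positive integer α with α ≡ 1 (mod 4), p ∤ Q, Q odd, and either (a) p ≡ 1 (mod 12) and N = p^α · Q², or (b) p ≡ 5 (mod 12) and N = p^α · (3Q)². -/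
/-!
Write `σ(N) = ∏ σ(q ^ e_q) = 2N` with `N` odd. The factor `2` appears in exactly one
`σ(p ^ α)`, which is then `≡ 2 (mod 4)`, while every other `σ(q ^ e_q)` is odd. For odd `q`,
`σ(q ^ e) ≡ e + 1 (mod 2)`, so every `e_q` with `q ≠ p` is even; and `σ(p ^ α) ≡ 2 (mod 4)`
forces `p ≡ 1 (mod 4)` (for `p ≡ 3` the sum is `0` or `1` mod 4) and then `α ≡ 1 (mod 4)`.
Finally, if `p ≡ 2 (mod 3)`, the `α + 1` terms of `σ(p ^ α)` cancel in pairs mod 3, so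
`3 ∣ σ(N) = 2N` and `3` divides the square part.
-/

open Finset

namespace Nat

theorem geom_sum_modEq_of_modEq_one {p m : ℕ} (hp : p ≡ 1 [MOD m]) (n : ℕ) :
    ∑ k ∈ range n, p ^ k ≡ n [MOD m] := by
  rw [← ZMod.natCast_eq_natCast_iff] at hp ⊢
  push_cast at hp ⊢
  simp [hp]

theorem geom_sum_modEq_of_dvd_add_one {p m : ℕ} (hp : m ∣ p + 1) (n : ℕ) :
    ∑ k ∈ range n, p ^ k ≡ if Even n then 0 else 1 [MOD m] := by
  have hp' : (p : ZMod m) = -1 := by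
    rw [← ZMod.natCast_eq_zero_iff] at hp
    push_cast at hp
    exact eq_neg_of_add_eq_zero_left hp
  rw [← ZMod.natCast_eq_natCast_iff]
  push_cast [hp']
  exact neg_one_geom_sum

theorem even_of_odd_geom_sum {q e : ℕ} (hq : Odd q) (h : Odd (∑ k ∈ range (e + 1), q ^ k)) :
    Even e := by
  have := geom_sum_modEq_of_modEq_one (m := 2) (odd_iff.mp hq) (e + 1)
  rw [odd_iff] at h
  rw [even_iff]
  unfold ModEq at this
  omega

theorem mod_four_eq_one_of_geom_sum_mod_four_eq_two {p α : ℕ} (hp : Odd p)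
    (h : (∑ k ∈ range (α + 1), p ^ k) % 4 = 2) : p % 4 = 1 ∧ α % 4 = 1 := by
  rw [odd_iff] at hp
  rcases (by omega : p % 4 = 1 ∨ p % 4 = 3) with hp4 | hp4
  · have := geom_sum_modEq_of_modEq_one (m := 4) hp4 (α + 1)
    unfold ModEq at this
    omega
  · have := geom_sum_modEq_of_dvd_add_one (p := p) (m := 4) (by omega) (α + 1)
    unfold ModEq at this
    split_ifs at this <;> omega

theorem exists_mod_four_eq_two_of_prod_eq_two_mul_odd {ι : Type*} {s : Finset ι} {f : ι → ℕ}
    {N : ℕ} (hN : Odd N) (h : ∏ i ∈ s, f i = 2 * N) :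
    ∃ i ∈ s, f i % 4 = 2 ∧ ∀ j ∈ s, j ≠ i → Odd (f j) := by
  classical
  obtain ⟨i, hi, a, ha⟩ := prime_two.prime.exists_mem_finset_dvd (h ▸ dvd_mul_right 2 N)
  have hrest : a * ∏ j ∈ s.erase i, f j = N := by
    rw [← mul_prod_erase s f hi, ha, mul_assoc] at h
    omega
  refine ⟨i, hi, ?_, fun j hj hji => ?_⟩
  · obtain ⟨b, rfl⟩ : Odd a := hN.of_dvd_nat ⟨_, hrest.symm⟩
    omega
  · exact hN.of_dvd_nat (hrest ▸ (dvd_prod_of_mem f (mem_erase.2 ⟨hji, hj⟩)).mul_left a)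

theorem isSquare_of_forall_even_factorization {n : ℕ} (h : ∀ p, Even (n.factorization p)) :
    IsSquare n := by
  rcases eq_or_ne n 0 with rfl | hn
  · exact IsSquare.zero
  rw [← prod_factorization_pow_eq_self hn]
  exact isSquare_prod _ fun p _ => (h p).isSquare_pow p

theorem exists_euler_form {N : ℕ} (hodd : Odd N) (hperf : ∑ d ∈ N.divisors, d = 2 * N) :
    ∃ p ∈ N.primeFactors, p % 4 = 1 ∧ N.factorization p % 4 = 1 ∧
      ∃ Q, ¬ p ∣ Q ∧ N = p ^ N.factorization p * Q ^ 2 := by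
  have hN0 : N ≠ 0 := by rintro rfl; exact not_odd_zero hodd
  rw [sum_divisors hN0] at hperf
  obtain ⟨p, hp, hσp, hσodd⟩ := exists_mod_four_eq_two_of_prod_eq_two_mul_odd hodd hperf
  obtain ⟨hp4, hα4⟩ := mod_four_eq_one_of_geom_sum_mod_four_eq_two
    (hodd.of_dvd_nat (dvd_of_mem_primeFactors hp)) hσp
  have hsq : IsSquare (ordCompl[p] N) := by
    refine isSquare_of_forall_even_factorization fun q => ?_
    rw [factorization_ordCompl, Finsupp.erase_apply]
    split_ifs with hqp
    · exact Even.zero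
    by_cases hq : q ∈ N.primeFactors
    · exact even_of_odd_geom_sum (hodd.of_dvd_nat (dvd_of_mem_primeFactors hq)) (hσodd q hq hqp)
    · rw [← support_factorization, Finsupp.notMem_support_iff] at hq
      rw [hq]
      exact Even.zero
  obtain ⟨Q, hQ⟩ := hsq.exists_sq
  refine ⟨p, hp, hp4, hα4, Q, fun hpQ => ?_, ?_⟩
  · exact not_dvd_ordCompl (prime_of_mem_primeFactors hp) hN0 (hQ ▸ dvd_pow hpQ two_ne_zero)
  · rw [← hQ, ordProj_mul_ordCompl_eq_self]

theorem three_dvd_of_prime_mod_three_eq_two {N p Q : ℕ}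
    (hperf : ∑ d ∈ N.divisors, d = 2 * N) (hp : p.Prime) (hp3 : p % 3 = 2)
    (hα : Odd (N.factorization p)) (hN : N = p ^ N.factorization p * Q ^ 2) : 3 ∣ Q := by
  have hpN : p ∈ N.primeFactors := by
    rw [← support_factorization, Finsupp.mem_support_iff]
    exact hα.pos.ne'
  have hN0 : N ≠ 0 := (mem_primeFactors.1 hpN).2.2
  have h3σ : 3 ∣ ∑ k ∈ range (N.factorization p + 1), p ^ k := by
    have := geom_sum_modEq_of_dvd_add_one (p := p) (m := 3) (by omega) (N.factorization p + 1)
    rw [if_pos hα.add_one] at this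
    exact dvd_of_mod_eq_zero this
  have h3N : 3 ∣ N := by
    have h3 : 3 ∣ 2 * N := hperf ▸ sum_divisors hN0 ▸ h3σ.trans (dvd_prod_of_mem _ hpN)
    omega
  rcases prime_three.dvd_mul.1 (hN ▸ h3N) with h | h
  · have := (prime_dvd_prime_iff_eq prime_three hp).1 (prime_three.dvd_of_dvd_pow h)
    omega
  · exact prime_three.dvd_of_dvd_pow h

end Nat

theorem refined_euler_form (N : ℕ) (hodd : Odd N) (hperf : ∑ d ∈ N.divisors, d = 2 * N) :
    ∃ (p α Q : ℕ), p.Prime ∧ 0 < α ∧ α % 4 = 1 ∧ ¬ p ∣ Q ∧ Odd Q ∧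
      ((p % 12 = 1 ∧ N = p ^ α * Q ^ 2) ∨ (p % 12 = 5 ∧ N = p ^ α * (3 * Q) ^ 2)) := by
  obtain ⟨p, hpN, hp4, hα4, Q, hpQ, hN⟩ := Nat.exists_euler_form hodd hperf
  have hp := Nat.prime_of_mem_primeFactors hpN
  have hQodd : Odd Q :=
    hodd.of_dvd_nat <| (dvd_pow_self Q two_ne_zero).trans (Dvd.intro_left _ hN.symm)
  have hαpos : 0 < N.factorization p := by omega
  rcases (by omega : p % 3 = 0 ∨ p % 3 = 1 ∨ p % 3 = 2) with hp3 | hp3 | hp3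
  · have := (Nat.prime_dvd_prime_iff_eq Nat.prime_three hp).1 (Nat.dvd_of_mod_eq_zero hp3)
    omega
  · exact ⟨p, _, Q, hp, hαpos, hα4, hpQ, hQodd, Or.inl ⟨by omega, hN⟩⟩
  · obtain ⟨Q', rfl⟩ := Nat.three_dvd_of_prime_mod_three_eq_two hperf hp hp3
      (Nat.odd_iff.2 (by omega)) hN
    exact ⟨p, _, Q', hp, hαpos, hα4, fun h => hpQ (h.mul_left 3),
      hQodd.of_dvd_nat (dvd_mul_left Q' 3), Or.inr ⟨by omega, hN⟩⟩
end

section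
/- Let N be an odd perfect number with N = p^α · Q², where p is a prime, p ≡ 1 (mod 12), α ≡ 5 (mod 12), Q is odd, and p does not divide Q. Then 3 divides N. -/
open Finset
open scoped ArithmeticFunction.sigma

/-! Since `p ≡ 1 (mod 3)` and `α ≡ 2 (mod 3)`, the factor `σ(p^α) = 1 + p + ⋯ + p^α ≡ α + 1 ≡ 0 (mod 3)`
of `σ(N) = σ(p^α) σ(Q²)`; hence `3 ∣ σ(N) = 2N`, so `3 ∣ N`. -/

theorem Nat.sum_range_pow_modEq_of_modEq_one {n p : ℕ} (hp : p ≡ 1 [MOD n]) (k : ℕ) :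
    ∑ i ∈ range k, p ^ i ≡ k [MOD n] := by
  induction k with
  | zero => rfl
  | succ k ih => simpa [sum_range_succ] using ih.add (hp.pow k)

theorem Nat.sigma_one_prime_pow_modEq {n p : ℕ} (hp : p.Prime) (hpn : p ≡ 1 [MOD n]) (α : ℕ) :
    σ 1 (p ^ α) ≡ α + 1 [MOD n] := by
  rw [ArithmeticFunction.sigma_one_apply, Nat.sum_divisors_prime_pow hp]
  exact Nat.sum_range_pow_modEq_of_modEq_one hpn (α + 1)

theorem three_dvd_N_general (N p α Q : ℕ) (hperf : ∑ d ∈ N.divisors, d = 2 * N)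
    (hN : N = p ^ α * Q ^ 2) (hp : p.Prime) (hp1 : p % 12 = 1)
    (hα : α % 12 = 5) (hpQ : ¬ p ∣ Q) :
    3 ∣ N := by
  have hσ_factor : 3 ∣ σ 1 (p ^ α) := by
    have hp3 : p ≡ 1 [MOD 3] := by unfold Nat.ModEq; omega
    have hα3 : α + 1 ≡ 0 [MOD 3] := by unfold Nat.ModEq; omega
    exact Nat.modEq_zero_iff_dvd.mp ((Nat.sigma_one_prime_pow_modEq hp hp3 α).trans hα3)
  have hcop : (p ^ α).Coprime (Q ^ 2) := ((hp.coprime_iff_not_dvd).mpr hpQ).pow α 2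
  have hσN : σ 1 N = σ 1 (p ^ α) * σ 1 (Q ^ 2) := by
    rw [hN]
    exact ArithmeticFunction.isMultiplicative_sigma.map_mul_of_coprime hcop
  have h3 : 3 ∣ 2 * N := by
    rw [← hperf, ← ArithmeticFunction.sigma_one_apply, hσN]
    exact hσ_factor.mul_right _
  exact Nat.Coprime.dvd_of_dvd_mul_left (by norm_num) h3

theorem three_dvd_N (N p α Q : ℕ) (hodd : Odd N) (hperf : ∑ d ∈ N.divisors, d = 2 * N)
    (hN : N = p ^ α * Q ^ 2) (hp : p.Prime) (hp1 : p % 12 = 1)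
    (hα : α % 12 = 5) (hQ : Odd Q) (hpQ : ¬ p ∣ Q) :
    3 ∣ N :=
  three_dvd_N_general N p α Q hperf hN hp hp1 hα hpQ
end

section
/- Let N be an odd perfect number with N = p^α · Q², where p is a prime, p ≡ 1 (mod 12), α ≡ 5 (mod 12), Q is odd, p does not divide Q, and (p − 1)/12 ≡ 2, 3, 5, or 6 (mod 7). Then 21 divides N. -/
/-! The factor `σ(p^α) = 1 + p + ⋯ + p^α` of `σ(N) = 2N` is divisible by 21. Since `p ≡ 1 (mod 3)`,
it is `≡ α + 1 ≡ 0 (mod 3)`. The condition on `(p - 1)/12` says `p ≢ 0, 1 (mod 7)`, and `6 ∣ α + 1`,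
so by Fermat `p^(α+1) ≡ 1 (mod 7)`, and the geometric sum vanishes mod 7. -/

open Finset

theorem geom_sum_dvd_sum_divisors_prime_pow_mul {p k m : ℕ} (hp : p.Prime) (hpm : ¬ p ∣ m) :
    ∑ i ∈ range (k + 1), p ^ i ∣ ∑ d ∈ (p ^ k * m).divisors, d := by
  rw [((hp.coprime_iff_not_dvd.mpr hpm).pow_left k).sum_divisors_mul, Nat.sum_divisors_prime_pow hp]
  exact dvd_mul_right _ _

theorem dvd_geom_sum_of_modEq_one {p m n : ℕ} (hp : p ≡ 1 [MOD m]) (hmn : m ∣ n) :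
    m ∣ ∑ i ∈ range n, p ^ i := by
  have hp' : (p : ZMod m) = 1 := by
    rw [← Nat.cast_one, ZMod.natCast_eq_natCast_iff]
    exact hp
  rw [← ZMod.natCast_eq_zero_iff]
  push_cast
  simp [hp', (ZMod.natCast_eq_zero_iff n m).mpr hmn]

theorem prime_dvd_geom_sum_of_sub_one_dvd {p q n : ℕ} (hq : q.Prime) (hpq : ¬ q ∣ p)
    (hp : ¬ p ≡ 1 [MOD q]) (hqn : q - 1 ∣ n) : q ∣ ∑ i ∈ range n, p ^ i := by
  have := Fact.mk hq
  have hpow : (p : ZMod q) ^ n = 1 := by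
    obtain ⟨k, rfl⟩ := hqn
    rw [pow_mul, ZMod.pow_card_sub_one_eq_one (mt (ZMod.natCast_eq_zero_iff p q).mp hpq), one_pow]
  have hp1 : (p : ZMod q) - 1 ≠ 0 := by
    rwa [sub_ne_zero, ← Nat.cast_one, Ne, ZMod.natCast_eq_natCast_iff]
  have hgeom := geom_sum_mul (p : ZMod q) n
  rw [hpow, sub_self] at hgeom
  rw [← ZMod.natCast_eq_zero_iff]
  push_cast
  exact (mul_eq_zero.mp hgeom).resolve_right hp1

theorem twentyone_dvd_N_general (N p α Q : ℕ) (hperf : ∑ d ∈ N.divisors, d = 2 * N)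
    (hN : N = p ^ α * Q ^ 2) (hp : p.Prime) (hp1 : p % 12 = 1)
    (hα : α % 12 = 5) (hpQ : ¬ p ∣ Q)
    (hn : (p - 1) / 12 % 7 = 2 ∨ (p - 1) / 12 % 7 = 3 ∨
          (p - 1) / 12 % 7 = 5 ∨ (p - 1) / 12 % 7 = 6) :
    21 ∣ N := by
  have hσ : ∑ i ∈ range (α + 1), p ^ i ∣ 2 * N :=
    hperf ▸ hN ▸ geom_sum_dvd_sum_divisors_prime_pow_mul hp (mt hp.dvd_of_dvd_pow hpQ)
  have h3 : 3 ∣ ∑ i ∈ range (α + 1), p ^ i :=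
    dvd_geom_sum_of_modEq_one (by unfold Nat.ModEq; omega) (by omega)
  have h7 : 7 ∣ ∑ i ∈ range (α + 1), p ^ i :=
    prime_dvd_geom_sum_of_sub_one_dvd (by norm_num) (by omega) (by unfold Nat.ModEq; omega) (by omega)
  exact Nat.Coprime.dvd_of_dvd_mul_left (by norm_num)
    ((Nat.Coprime.mul_dvd_of_dvd_of_dvd (by norm_num) h3 h7).trans hσ)

theorem twentyone_dvd_N (N p α Q : ℕ) (hodd : Odd N) (hperf : ∑ d ∈ N.divisors, d = 2 * N)
    (hN : N = p ^ α * Q ^ 2) (hp : p.Prime) (hp1 : p % 12 = 1)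
    (hα : α % 12 = 5) (hQ : Odd Q) (hpQ : ¬ p ∣ Q)
    (hn : (p - 1) / 12 % 7 = 2 ∨ (p - 1) / 12 % 7 = 3 ∨
          (p - 1) / 12 % 7 = 5 ∨ (p - 1) / 12 % 7 = 6) :
    21 ∣ N :=
  twentyone_dvd_N_general N p α Q hperf hN hp hp1 hα hpQ hn
end

section
/- Let N be an odd perfect number with N = p^α · Q², where p is a prime, p ≡ 5 (mod 12), α ≡ 5 (mod 12), Q is odd, p does not divide Q, and (p − 5)/12 ≡ 0, 1, 4, or 5 (mod 7). Then 7 divides N. -/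
/-!
Since `p ∤ Q`, the divisor sum is multiplicative along `N = p ^ α * Q ^ 2`, so
`σ(p ^ α) = 1 + p + ⋯ + p ^ α` divides `σ(N) = 2N`. Writing `p = 12k + 5` gives
`p ≡ 5k + 5 (mod 7)`, and the allowed residues of `k` are exactly those with `p ≢ 0, 1 (mod 7)`.
As `6 ∣ α + 1`, Fermat's little theorem makes `(p - 1) σ(p ^ α) = p ^ (α + 1) - 1` vanish
modulo 7 with `p - 1` invertible, hence `7 ∣ 2N` and `7 ∣ N`.
-/

open Finset

theorem Nat.Prime.dvd_geom_sum {q x n : ℕ} (hq : q.Prime) (hx : ¬ q ∣ x)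
    (hx1 : ¬ x ≡ 1 [MOD q]) (hn : q - 1 ∣ n) : q ∣ ∑ i ∈ range n, x ^ i := by
  have := Fact.mk hq
  rw [← ZMod.natCast_eq_zero_iff]
  push_cast
  have hx0 : (x : ZMod q) ≠ 0 := by rwa [Ne, ZMod.natCast_eq_zero_iff]
  have hsub : (x : ZMod q) - 1 ≠ 0 := by
    rwa [sub_ne_zero, ← Nat.cast_one, Ne, ZMod.natCast_eq_natCast_iff]
  obtain ⟨m, rfl⟩ := hn
  have hpow : (x : ZMod q) ^ ((q - 1) * m) = 1 := by
    rw [pow_mul, ZMod.pow_card_sub_one_eq_one hx0, one_pow]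
  have hgeom := geom_sum_mul (x : ZMod q) ((q - 1) * m)
  rw [hpow, sub_self] at hgeom
  exact (mul_eq_zero_iff_right hsub).mp hgeom

theorem seven_dvd_N_general (N p α Q : ℕ) (hperf : ∑ d ∈ N.divisors, d = 2 * N)
    (hN : N = p ^ α * Q ^ 2) (hp : p.Prime) (hp5 : p % 12 = 5)
    (hα : α % 12 = 5) (hpQ : ¬ p ∣ Q)
    (hn : (p - 5) / 12 % 7 = 0 ∨ (p - 5) / 12 % 7 = 1 ∨
          (p - 5) / 12 % 7 = 4 ∨ (p - 5) / 12 % 7 = 5) :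
    7 ∣ N := by
  have hσ : 7 ∣ ∑ d ∈ (p ^ α).divisors, d := by
    rw [Nat.sum_divisors_prime_pow hp]
    exact Nat.prime_seven.dvd_geom_sum (by omega) (by unfold Nat.ModEq; omega) (by omega)
  have hcop : (p ^ α).Coprime (Q ^ 2) := (hp.coprime_iff_not_dvd.mpr hpQ).pow α 2
  have h2N : 7 ∣ 2 * N := by
    rw [← hperf, hN, Nat.Coprime.sum_divisors_mul hcop]
    exact hσ.mul_right _
  omega

theorem seven_dvd_N (N p α Q : ℕ) (hodd : Odd N) (hperf : ∑ d ∈ N.divisors, d = 2 * N)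
    (hN : N = p ^ α * Q ^ 2) (hp : p.Prime) (hp5 : p % 12 = 5)
    (hα : α % 12 = 5) (hQ : Odd Q) (hpQ : ¬ p ∣ Q)
    (hn : (p - 5) / 12 % 7 = 0 ∨ (p - 5) / 12 % 7 = 1 ∨
          (p - 5) / 12 % 7 = 4 ∨ (p - 5) / 12 % 7 = 5) :
    7 ∣ N :=
  seven_dvd_N_general N p α Q hperf hN hp hp5 hα hpQ hn
end
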